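/- arXiv:1901.06807 — 3 statements merged into one kernel-verified Lean document; each statement's English description precedes it below -/
import Mathlib

section
/- Let X and Y be positive definite n×n complex matrices and let p < 0 be real. Then Tr(X^p Y^{1-p}) ≥ p·Tr(X) + (1-p)·Tr(Y). -/
open Matrix ComplexOrder

variable {n : ℕ}

/-- Apply a real function to a matrix via the spectral decomposition (functional calculus).
Returns `0` if the matrix is not Hermitian. -/
noncomputable def matFun (f : ℝ → ℝ) (A : Matrix (Fin n) (Fin n) ℂ) :
    Matrix (Fin n) (Fin n) ℂ :=
  if hA : A.IsHermitian then
    (hA.eigenvectorUnitary : Matrix (Fin n) (Fin n) ℂ) *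
      Matrix.diagonal (fun i => (f (hA.eigenvalues i) : ℂ)) *
      (star hA.eigenvectorUnitary : Matrix (Fin n) (Fin n) ℂ)
  else 0

/-- Matrix power `A^r` by functional calculus. -/
noncomputable def mpow (A : Matrix (Fin n) (Fin n) ℂ) (r : ℝ) : Matrix (Fin n) (Fin n) ℂ :=
  matFun (fun t => t ^ r) A

/-- Deformed matrix logarithm `log_q`. -/
noncomputable def mlogq (q : ℝ) (A : Matrix (Fin n) (Fin n) ℂ) : Matrix (Fin n) (Fin n) ℂ :=
  matFun (fun t => if q = 1 then Real.log t else (t ^ (q - 1) - 1) / (q - 1)) A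

/-- Deformed matrix exponential `exp_q`. -/
noncomputable def mexpq (q : ℝ) (M : Matrix (Fin n) (Fin n) ℂ) : Matrix (Fin n) (Fin n) ℂ :=
  matFun (fun s => if q = 1 then Real.exp s else ((q - 1) * s + 1) ^ (1 / (q - 1))) M

/-- Real part of the trace. -/
noncomputable def rtr (A : Matrix (Fin n) (Fin n) ℂ) : ℝ := (Matrix.trace A).re

/-- Scalar deformed logarithm. -/
noncomputable def dlog (q t : ℝ) : ℝ := if q = 1 then Real.log t else (t ^ (q - 1) - 1) / (q - 1)

/-!
Diagonalise `X = U diag(λ) U*` and `Y = V diag(μ) V*`. With `W = U* V` unitary,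
`Tr(f(X) g(Y)) = ∑ᵢⱼ f(λᵢ) g(μⱼ) |Wᵢⱼ|²`, and `(|Wᵢⱼ|²)` is doubly stochastic. So both sides of
the claim are averages over the same weights `|Wᵢⱼ|²`, and it reduces to the scalar inequality
`p a + (1 - p) b ≤ aᵖ b¹⁻ᵖ` for `a, b > 0`, `p ≤ 0`, which is Bernoulli's inequality for the
exponent `1 - p ≥ 1` applied to `b / a`.
-/

open Finset

lemma Real.mul_add_one_sub_mul_le_rpow_mul_rpow_of_nonpos {a b p : ℝ} (ha : 0 < a) (hb : 0 < b)
    (hp : p ≤ 0) :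
    p * a + (1 - p) * b ≤ a ^ p * b ^ (1 - p) := by
  have bernoulli : 1 + (1 - p) * (b / a - 1) ≤ (b / a) ^ (1 - p) := by
    simpa using one_add_mul_self_le_rpow_one_add (s := b / a - 1)
      (by linarith [div_pos hb ha]) (by linarith : 1 ≤ 1 - p)
  have hap : a ^ p = a / a ^ (1 - p) := by
    rw [eq_div_iff (Real.rpow_pos_of_pos ha _).ne', ← Real.rpow_add ha]
    norm_num
  calc p * a + (1 - p) * b = a * (1 + (1 - p) * (b / a - 1)) := by field_simp; ring
    _ ≤ a * (b / a) ^ (1 - p) := mul_le_mul_of_nonneg_left bernoulli ha.le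
    _ = a ^ p * b ^ (1 - p) := by rw [Real.div_rpow hb.le ha.le, hap]; field_simp

namespace Matrix

variable {m : Type*} [Fintype m] [DecidableEq m]

lemma sum_normSq_row_of_mem_unitary {W : Matrix m m ℂ} (hW : W ∈ unitary (Matrix m m ℂ))
    (i : m) : ∑ j, Complex.normSq (W i j) = 1 := by
  have h : (W * star W) i i = 1 := by rw [Unitary.mul_star_self_of_mem hW, one_apply_eq]
  simp only [mul_apply, star_apply, Complex.star_def, Complex.mul_conj] at h
  exact_mod_cast h

lemma sum_normSq_col_of_mem_unitary {W : Matrix m m ℂ} (hW : W ∈ unitary (Matrix m m ℂ))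
    (j : m) : ∑ i, Complex.normSq (W i j) = 1 := by
  simpa [star_apply] using sum_normSq_row_of_mem_unitary (Unitary.star_mem hW) j

lemma trace_diagonal_mul_mul_diagonal_mul_star (a b : m → ℂ) (W : Matrix m m ℂ) :
    (diagonal a * W * diagonal b * star W).trace =
      ∑ i, ∑ j, a i * b j * Complex.normSq (W i j) := by
  simp only [trace, diag_apply, mul_apply (M := diagonal a * W * diagonal b)]
  refine sum_congr rfl fun i _ => sum_congr rfl fun j _ => ?_
  rw [mul_diagonal, diagonal_mul, star_apply, Complex.star_def, Complex.normSq_eq_conj_mul_self]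
  ring

lemma sum_add_sum_le_sum_sum_mul_normSq_of_mem_unitary {W : Matrix m m ℂ}
    (hW : W ∈ unitary (Matrix m m ℂ)) {x y : m → ℝ} {F : m → m → ℝ}
    (h : ∀ i j, x i + y j ≤ F i j) :
    ∑ i, x i + ∑ j, y j ≤ ∑ i, ∑ j, F i j * Complex.normSq (W i j) :=
  calc ∑ i, x i + ∑ j, y j = ∑ i, ∑ j, (x i + y j) * Complex.normSq (W i j) := by
        simp only [add_mul, sum_add_distrib, ← mul_sum, sum_normSq_row_of_mem_unitary hW, mul_one]
        rw [sum_comm (f := fun i j => y j * _)]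
        simp only [← mul_sum, sum_normSq_col_of_mem_unitary hW, mul_one]
    _ ≤ ∑ i, ∑ j, F i j * Complex.normSq (W i j) :=
        sum_le_sum fun i _ => sum_le_sum fun j _ =>
          mul_le_mul_of_nonneg_right (h i j) (Complex.normSq_nonneg _)

end Matrix

lemma rtr_eq_sum_eigenvalues {A : Matrix (Fin n) (Fin n) ℂ} (hA : A.IsHermitian) :
    rtr A = ∑ i, hA.eigenvalues i := by
  simp [rtr, hA.trace_eq_sum_eigenvalues, Complex.re_sum]

lemma rtr_matFun_mul_matFun {A B : Matrix (Fin n) (Fin n) ℂ} (hA : A.IsHermitian)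
    (hB : B.IsHermitian) (f g : ℝ → ℝ) :
    rtr (matFun f A * matFun g B) = ∑ i, ∑ j, f (hA.eigenvalues i) * g (hB.eigenvalues j) *
      Complex.normSq ((star (hA.eigenvectorUnitary : Matrix (Fin n) (Fin n) ℂ) *
        hB.eigenvectorUnitary) i j) := by
  set U : Matrix (Fin n) (Fin n) ℂ := (hA.eigenvectorUnitary : Matrix (Fin n) (Fin n) ℂ)
  set V : Matrix (Fin n) (Fin n) ℂ := (hB.eigenvectorUnitary : Matrix (Fin n) (Fin n) ℂ)
  have hconj : (matFun f A * matFun g B).trace =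
      (diagonal (fun i => (f (hA.eigenvalues i) : ℂ)) * (star U * V) *
        diagonal (fun j => (g (hB.eigenvalues j) : ℂ)) * star (star U * V)).trace := by
    rw [matFun, matFun, dif_pos hA, dif_pos hB]
    simp only [star_mul, star_star, Matrix.mul_assoc]
    rw [trace_mul_comm]
    simp only [Matrix.mul_assoc]
    rfl
  rw [rtr, hconj, trace_diagonal_mul_mul_diagonal_mul_star, Complex.re_sum]
  simp only [Complex.re_sum, ← Complex.ofReal_mul, Complex.ofReal_re]

theorem reverse_tracial_young_neg {n : ℕ} (X Y : Matrix (Fin n) (Fin n) ℂ)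
    (hX : X.PosDef) (hY : Y.PosDef) (p : ℝ) (hp : p < 0) :
    p * rtr X + (1 - p) * rtr Y ≤ rtr (mpow X p * mpow Y (1 - p)) := by
  have hW : star (hX.1.eigenvectorUnitary : Matrix (Fin n) (Fin n) ℂ) *
      hY.1.eigenvectorUnitary ∈ unitary (Matrix (Fin n) (Fin n) ℂ) :=
    Submonoid.mul_mem _ (Unitary.star_mem hX.1.eigenvectorUnitary.2) hY.1.eigenvectorUnitary.2
  rw [rtr_eq_sum_eigenvalues hX.1, rtr_eq_sum_eigenvalues hY.1, mul_sum, mul_sum, mpow, mpow,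
    rtr_matFun_mul_matFun hX.1 hY.1]
  exact sum_add_sum_le_sum_sum_mul_normSq_of_mem_unitary hW fun i j =>
    Real.mul_add_one_sub_mul_le_rpow_mul_rpow_of_nonpos (hX.eigenvalues_pos i)
      (hY.eigenvalues_pos j) hp.le
end

section
/- Let X and A be positive definite n×n matrices. Then the quantum relative entropy D(X|A) = Tr(X log X - X log A) equals the supremum over all self-adjoint matrices L of Tr(X) + Tr(XL) - Tr(exp(L + log A)), attained at L = log X - log A. -/
/-!
With `H = L + log A`, both claims concern `Tr X + Tr (X H) - Tr (exp H)` for Hermitian `H`: at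
`H = log X` it equals `Tr (X log X)` because `exp (log X) = X`, and for every `H` it is at most
`Tr (X log X)` (Klein's inequality). Writing `X = ∑ λᵢ uᵢ uᵢ*` and `H = ∑ μⱼ vⱼ vⱼ*`, the weights
`pᵢⱼ = |⟪uᵢ, vⱼ⟫|²` form a doubly stochastic matrix and the left side becomes
`∑ pᵢⱼ (λᵢ + λᵢ μⱼ - exp μⱼ)`, so it suffices that `a + a m - exp m ≤ a log a` for `a > 0`, which is
`a` times `1 + (m - log a) ≤ exp (m - log a)`.
-/

open Matrix ComplexOrder

variable {n : ℕ}

lemma Real.add_mul_sub_exp_le_mul_log {a : ℝ} (ha : 0 < a) (m : ℝ) :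
    a + a * m - Real.exp m ≤ a * Real.log a := by
  have h := mul_le_mul_of_nonneg_left (Real.add_one_le_exp (m - Real.log a)) ha.le
  rw [Real.exp_sub, Real.exp_log ha, mul_div_cancel₀ _ ha.ne'] at h
  linarith

section

open Unitary

variable {𝕜 ι : Type*} [RCLike 𝕜] [Fintype ι] [DecidableEq ι]

lemma Matrix.sum_add_sum_mul_sub_sum_exp_le_of_mem_doublyStochastic {p : Matrix ι ι ℝ}
    (hp : p ∈ doublyStochastic ℝ ι) {a : ι → ℝ} (ha : ∀ i, 0 < a i) (m : ι → ℝ) :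
    ∑ i, a i + ∑ i, ∑ j, a i * m j * p i j - ∑ j, Real.exp (m j) ≤
      ∑ i, a i * Real.log (a i) := by
  have hrow := sum_row_of_mem_doublyStochastic hp
  calc ∑ i, a i + ∑ i, ∑ j, a i * m j * p i j - ∑ j, Real.exp (m j)
      = ∑ i, ∑ j, p i j * (a i + a i * m j - Real.exp (m j)) := by
        simp only [mul_add, mul_sub, Finset.sum_add_distrib, Finset.sum_sub_distrib]
        rw [Finset.sum_comm (f := fun i j => p i j * Real.exp (m j))]
        simp only [mul_comm (p _ _), ← Finset.mul_sum, hrow, sum_col_of_mem_doublyStochastic hp,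
          mul_one]
    _ ≤ ∑ i, ∑ j, p i j * (a i * Real.log (a i)) :=
        Finset.sum_le_sum fun i _ => Finset.sum_le_sum fun j _ =>
          mul_le_mul_of_nonneg_left (Real.add_mul_sub_exp_le_mul_log (ha i) (m j))
            (nonneg_of_mem_doublyStochastic hp)
    _ = ∑ i, a i * Real.log (a i) := by simp only [← Finset.sum_mul, hrow, one_mul]

lemma Matrix.sum_norm_sq_row_eq_one {W : Matrix ι ι 𝕜} (hW : W ∈ unitaryGroup ι 𝕜) (i : ι) :
    ∑ j, ‖W i j‖ ^ 2 = 1 := by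
  have h : (W * star W) i i = (1 : Matrix ι ι 𝕜) i i := by rw [Unitary.mul_star_self_of_mem hW]
  simp only [mul_apply, star_apply, RCLike.star_def, RCLike.mul_conj, one_apply_eq] at h
  exact_mod_cast h

lemma Matrix.map_norm_sq_mem_doublyStochastic {W : Matrix ι ι 𝕜} (hW : W ∈ unitaryGroup ι 𝕜) :
    W.map (‖·‖ ^ 2) ∈ doublyStochastic ℝ ι := by
  refine mem_doublyStochastic_iff_sum.2 ⟨fun i j => sq_nonneg _, sum_norm_sq_row_eq_one hW,
    fun j => ?_⟩
  simpa using sum_norm_sq_row_eq_one (Unitary.star_mem hW) j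

lemma Matrix.re_trace_conj_diagonal_mul_conj_diagonal (U V : unitaryGroup ι 𝕜) (a b : ι → ℝ) :
    RCLike.re (trace (conjStarAlgAut 𝕜 _ U (diagonal (RCLike.ofReal ∘ a)) *
      conjStarAlgAut 𝕜 _ V (diagonal (RCLike.ofReal ∘ b)))) =
      ∑ i, ∑ j, a i * b j * ‖(star (U : Matrix ι ι 𝕜) * V) i j‖ ^ 2 := by
  set W := star (U : Matrix ι ι 𝕜) * V
  have hcyc : trace (conjStarAlgAut 𝕜 _ U (diagonal (RCLike.ofReal ∘ a)) *
      conjStarAlgAut 𝕜 _ V (diagonal (RCLike.ofReal ∘ b))) =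
      trace (diagonal (RCLike.ofReal ∘ a) * W * diagonal (RCLike.ofReal ∘ b) * star W) := by
    simp only [conjStarAlgAut_apply, W, star_mul, star_star, Matrix.mul_assoc]
    rw [trace_mul_comm]
    simp only [Matrix.mul_assoc]
  rw [hcyc]
  simp only [trace, diag_apply, mul_apply (N := star W), mul_diagonal, diagonal_mul, star_apply,
    map_sum]
  refine Finset.sum_congr rfl fun i _ => Finset.sum_congr rfl fun j _ => ?_
  rw [mul_assoc, mul_assoc, mul_left_comm (W i j), RCLike.star_def, RCLike.mul_conj]
  simp only [Function.comp_apply]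
  norm_cast
  ring

lemma Matrix.IsHermitian.trace_cfc {A : Matrix ι ι 𝕜} (hA : A.IsHermitian) (f : ℝ → ℝ) :
    trace (cfc f A) = ∑ i, (f (hA.eigenvalues i) : 𝕜) := by
  rw [hA.cfc_eq, IsHermitian.cfc, conjStarAlgAut_apply, trace_mul_cycle, coe_star_mul_self,
    one_mul, trace_diagonal]
  rfl

lemma Matrix.IsHermitian.re_trace_mul {X H : Matrix ι ι 𝕜} (hX : X.IsHermitian)
    (hH : H.IsHermitian) :
    RCLike.re (trace (X * H)) = ∑ i, ∑ j, hX.eigenvalues i * hH.eigenvalues j *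
      ‖(star (hX.eigenvectorUnitary : Matrix ι ι 𝕜) * hH.eigenvectorUnitary) i j‖ ^ 2 := by
  conv_lhs => rw [hX.spectral_theorem, hH.spectral_theorem]
  exact re_trace_conj_diagonal_mul_conj_diagonal _ _ _ _

lemma Matrix.IsHermitian.re_trace_mul_cfc {X : Matrix ι ι 𝕜} (hX : X.IsHermitian) (f : ℝ → ℝ) :
    RCLike.re (trace (X * cfc f X)) = ∑ i, hX.eigenvalues i * f (hX.eigenvalues i) := by
  have hXf : X * cfc f X = cfc (fun x => x * f x) X := by
    nth_rewrite 1 [← cfc_id' ℝ X hX.isSelfAdjoint]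
    exact (cfc_mul _ _ X (finite_real_spectrum.continuousOn _)
      (finite_real_spectrum.continuousOn _)).symm
  rw [hXf, hX.trace_cfc]
  simp only [map_sum, RCLike.ofReal_re]

lemma Matrix.PosDef.cfc_exp_cfc_log {X : Matrix ι ι 𝕜} (hX : X.PosDef) :
    cfc Real.exp (cfc Real.log X) = X := by
  have hspec : ∀ x ∈ spectrum ℝ X, 0 < x := by
    rw [hX.isHermitian.spectrum_real_eq_range_eigenvalues]
    rintro _ ⟨i, rfl⟩
    exact hX.eigenvalues_pos i
  have hXsa := hX.isHermitian.isSelfAdjoint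
  rw [← cfc_comp' Real.exp Real.log X (hf := finite_real_spectrum.continuousOn _) (ha := hXsa)]
  conv_rhs => rw [← cfc_id' ℝ X hXsa]
  exact cfc_congr fun x hx => Real.exp_log (hspec x hx)

theorem Matrix.PosDef.klein_inequality {X H : Matrix ι ι 𝕜} (hX : X.PosDef)
    (hH : H.IsHermitian) :
    RCLike.re (trace X) + RCLike.re (trace (X * H)) - RCLike.re (trace (cfc Real.exp H)) ≤
      RCLike.re (trace (X * cfc Real.log X)) := by
  set U := (hX.isHermitian.eigenvectorUnitary : Matrix ι ι 𝕜)
  set V := (hH.eigenvectorUnitary : Matrix ι ι 𝕜)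
  have hW : (star U * V).map (‖·‖ ^ 2) ∈ doublyStochastic ℝ ι :=
    map_norm_sq_mem_doublyStochastic <| mul_mem (star_mem (SetLike.coe_mem _)) (SetLike.coe_mem _)
  rw [hX.isHermitian.trace_eq_sum_eigenvalues, hX.isHermitian.re_trace_mul hH, hH.trace_cfc,
    hX.isHermitian.re_trace_mul_cfc]
  simpa only [map_sum, RCLike.ofReal_re, tsub_le_iff_right, map_apply] using
    sum_add_sum_mul_sub_sum_exp_le_of_mem_doublyStochastic hW hX.eigenvalues_pos hH.eigenvalues

end

-- Off the Hermitian matrices both sides are `0`.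
lemma matFun_eq_cfc (f : ℝ → ℝ) (A : Matrix (Fin n) (Fin n) ℂ) : matFun f A = cfc f A := by
  by_cases hA : A.IsHermitian
  · rw [matFun, dif_pos hA, hA.cfc_eq, IsHermitian.cfc, Unitary.conjStarAlgAut_apply]
    rfl
  · exact (dif_neg hA).trans (cfc_apply_of_not_predicate A hA).symm

theorem relative_entropy_variational_general {n : ℕ}
    (X A : Matrix (Fin n) (Fin n) ℂ) (hX : X.PosDef) :
    (∀ L : Matrix (Fin n) (Fin n) ℂ, L.IsHermitian →
      rtr X + rtr (X * L) - rtr (matFun Real.exp (L + matFun Real.log A)) ≤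
        rtr (X * (matFun Real.log X - matFun Real.log A))) ∧
    rtr X + rtr (X * (matFun Real.log X - matFun Real.log A)) -
        rtr (matFun Real.exp ((matFun Real.log X - matFun Real.log A) + matFun Real.log A)) =
      rtr (X * (matFun Real.log X - matFun Real.log A)) := by
  simp only [rtr, matFun_eq_cfc, ← RCLike.re_to_complex]
  refine ⟨fun L hL => ?_, ?_⟩
  · have h := hX.klein_inequality (hL.add (cfc_predicate Real.log A))
    rw [mul_add, trace_add, map_add] at h
    rw [mul_sub, trace_sub, map_sub]
    linarith
  · rw [sub_add_cancel, hX.cfc_exp_cfc_log]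
    ring

theorem relative_entropy_variational {n : ℕ}
    (X A : Matrix (Fin n) (Fin n) ℂ) (hX : X.PosDef) (hA : A.PosDef) :
    (∀ L : Matrix (Fin n) (Fin n) ℂ, L.IsHermitian →
      rtr X + rtr (X * L) - rtr (matFun Real.exp (L + matFun Real.log A)) ≤
        rtr (X * (matFun Real.log X - matFun Real.log A))) ∧
    rtr X + rtr (X * (matFun Real.log X - matFun Real.log A)) -
        rtr (matFun Real.exp ((matFun Real.log X - matFun Real.log A) + matFun Real.log A)) =
      rtr (X * (matFun Real.log X - matFun Real.log A)) :=
  relative_entropy_variational_general X A hX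
end

section
/- For real numbers s and λ > 0 with q ≤ 2, q ≠ 1, and (q-1)s + 1 > 0 (so that exp_q(s) is defined, when q < 1 assume (q-1)s+1 > 0 as well), one has exp_q(s) = max over λ > 0 of λ - λ^{2-q}(log_q λ - s), with the maximum attained at λ = exp_q(s). -/
/-- Scalar deformed exponential (for `q ≠ 1`). -/
noncomputable def dexp (q s : ℝ) : ℝ := ((q - 1) * s + 1) ^ (1 / (q - 1))

/-!
Put `e = exp_q s`, so that `log_q e = s`. For `t > 0`, the objective equals
`t + (t ^ p * e ^ (1 - p) - t) / (1 - p)` with `p = 2 - q ≥ 0`, and after scaling `u = t / e`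
the bound by `e` is Bernoulli's inequality for `u ^ p`: concave for `p < 1`, convex for `p > 1`.
-/

open Real

theorem rpow_sub_self_div_one_sub_le {u p : ℝ} (hu : 0 ≤ u) (hp : 0 ≤ p) (hp1 : p ≠ 1) :
    (u ^ p - u) / (1 - p) ≤ 1 - u := by
  have hu1 : (-1 : ℝ) ≤ u - 1 := by linarith
  have hbase : 1 + (u - 1) = u := by ring
  rcases lt_or_gt_of_ne hp1 with hlt | hgt
  · have hb := rpow_one_add_le_one_add_mul_self hu1 hp hlt.le
    rw [hbase] at hb
    rw [div_le_iff₀ (by linarith)]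
    nlinarith
  · have hb := one_add_mul_self_le_rpow_one_add hu1 hgt.le
    rw [hbase] at hb
    rw [div_le_iff_of_neg (by linarith)]
    nlinarith

theorem rpow_mul_rpow_one_sub_sub_div_le {t e p : ℝ} (ht : 0 ≤ t) (he : 0 < e) (hp : 0 ≤ p)
    (hp1 : p ≠ 1) : (t ^ p * e ^ (1 - p) - t) / (1 - p) ≤ e - t := by
  have hscale : t ^ p * e ^ (1 - p) = e * (t / e) ^ p := by
    rw [div_rpow ht he.le, rpow_sub he, rpow_one]
    field_simp
  have hbound := rpow_sub_self_div_one_sub_le (div_nonneg ht he.le) hp hp1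
  calc (t ^ p * e ^ (1 - p) - t) / (1 - p)
      = e * (((t / e) ^ p - t / e) / (1 - p)) := by
        rw [hscale]; field_simp
    _ ≤ e * (1 - t / e) := mul_le_mul_of_nonneg_left hbound he.le
    _ = e - t := by field_simp

theorem dlog_of_ne_one {q : ℝ} (hq : q ≠ 1) (t : ℝ) : dlog q t = (t ^ (q - 1) - 1) / (q - 1) :=
  if_neg hq

theorem dexp_pos {q s : ℝ} (hs : 0 < (q - 1) * s + 1) : 0 < dexp q s :=
  rpow_pos_of_pos hs _

theorem dlog_dexp {q s : ℝ} (hq : q ≠ 1) (hs : 0 < (q - 1) * s + 1) : dlog q (dexp q s) = s := by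
  have hq' : q - 1 ≠ 0 := sub_ne_zero.mpr hq
  rw [dlog_of_ne_one hq, dexp, ← rpow_mul hs.le, one_div_mul_cancel hq', rpow_one]
  field_simp
  ring

theorem sub_rpow_mul_dlog_sub_dlog_le {q t e : ℝ} (hq : q ≤ 2) (hq1 : q ≠ 1) (ht : 0 < t)
    (he : 0 < e) : t - t ^ (2 - q) * (dlog q t - dlog q e) ≤ e := by
  have htt : t ^ (2 - q) * t ^ (q - 1) = t := by
    rw [← rpow_add ht]; norm_num
  have hobj : t - t ^ (2 - q) * (dlog q t - dlog q e)
      = t + (t ^ (2 - q) * e ^ (1 - (2 - q)) - t) / (1 - (2 - q)) := by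
    rw [dlog_of_ne_one hq1, dlog_of_ne_one hq1, show 1 - (2 - q) = q - 1 by ring]
    field_simp
    linear_combination -htt
  have hbound := rpow_mul_rpow_one_sub_sub_div_le ht.le he (p := 2 - q) (by linarith)
    (by contrapose! hq1; linarith)
  linarith

theorem scalar_legendre_max (q s : ℝ) (hq : q ≤ 2) (hq1 : q ≠ 1)
    (hs : 0 < (q - 1) * s + 1) :
    (∀ t : ℝ, 0 < t → t - t ^ (2 - q) * (dlog q t - s) ≤ dexp q s) ∧
    0 < dexp q s ∧
    dexp q s - (dexp q s) ^ (2 - q) * (dlog q (dexp q s) - s) = dexp q s := by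
  have hlog := dlog_dexp hq1 hs
  refine ⟨fun t ht => ?_, dexp_pos hs, by rw [hlog, sub_self, mul_zero, sub_zero]⟩
  simpa only [hlog] using sub_rpow_mul_dlog_sub_dlog_le hq hq1 ht (dexp_pos hs)
end
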